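/- For every nonempty finite set F ⊂ ℝ and every ε > 0, one has (1/|F|²)·Σ_{x,x'∈F, x≠x'} (−log|x−x'|) + (2/|F|)·Σ_{x∈F} log⁺|x| ≥ (1/|F|²)·Σ_{x∈F} Σ_{x'∈F} ∫₀¹∫₀¹ −log| x + ε·e^{2πit} − x' − ε·e^{2πis} | dt ds + (2/|F|)·Σ_{x∈F} ∫₀¹ log⁺| x + ε·e^{2πit} | dt − 2ε + (log ε)/|F|. -/

import Mathlib

/-!
By the mean value formula for `log |· - w|` on circles (Mathlib's
`circleAverage_log_norm_sub_const_eq_log_radius_add_posLog`), the uniform measure on the circle of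
radius `ε` around `c` has logarithmic potential `log ε + log⁺ (|w - c| / ε) = log (max ε |w - c|)`.
So a circle has self-energy exactly `-log ε`, which accounts for the diagonal terms and the error
`log ε / |F|`. For distinct centres, `log⁺ ≥ log` and a second use of the mean value formula bound
the mutual energy by `-log |x - x'|`. Finally `log⁺ (m + ε) ≤ log⁺ m + ε` controls the `log⁺`
terms, which produces the error `-2ε`.
-/

/-- log⁺ -/
noncomputable def logPlus (t : ℝ) : ℝ := max (Real.log t) 0

open Real MeasureTheory

lemma logPlus_eq_posLog : logPlus = posLog := by
  funext t
  exact max_comm _ _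

lemma posLog_add_le {m δ : ℝ} (hm : 0 ≤ m) (hδ : 0 ≤ δ) : log⁺ (m + δ) ≤ log⁺ m + δ := by
  rw [posLog_eq_log_max_one (by positivity), posLog_eq_log_max_one hm]
  have hmax : max 1 (m + δ) ≤ max 1 m * (1 + δ) := by
    have h1 := le_max_left 1 m
    have hm1 := le_max_right 1 m
    exact max_le (by nlinarith) (by nlinarith)
  calc log (max 1 (m + δ)) ≤ log (max 1 m * (1 + δ)) := log_le_log (by positivity) hmax
    _ = log (max 1 m) + log (1 + δ) := log_mul (by positivity) (by positivity)
    _ ≤ log (max 1 m) + δ := by linarith [log_le_sub_one_of_pos (by positivity : 0 < 1 + δ)]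

lemma log_le_posLog (x : ℝ) : log x ≤ log⁺ x := le_max_right _ _

section UnitIntervalParametrization

variable {E : Type*} [NormedAddCommGroup E]

lemma circleMap_two_pi_mul (c : ℂ) (R t : ℝ) :
    circleMap c R (2 * π * t) = c + R * Complex.exp (2 * π * Complex.I * t) := by
  simp only [circleMap]
  push_cast
  ring_nf

theorem CircleIntegrable.intervalIntegrable_comp_exp {f : ℂ → E} {c : ℂ} {R : ℝ}
    (hf : CircleIntegrable f c R) :
    IntervalIntegrable (fun t : ℝ ↦ f (c + R * Complex.exp (2 * π * Complex.I * t)))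
      volume 0 1 := by
  have h := hf.comp_mul_left (c := 2 * π)
  simp only [zero_div, div_self two_pi_pos.ne', circleMap_two_pi_mul] at h
  exact h

theorem integral_comp_exp_eq_circleAverage [NormedSpace ℝ E] (f : ℂ → E) (c : ℂ) (R : ℝ) :
    ∫ t in (0:ℝ)..1, f (c + R * Complex.exp (2 * π * Complex.I * t)) = circleAverage f c R := by
  have h := intervalIntegral.integral_comp_mul_left (fun θ ↦ f (circleMap c R θ))
    two_pi_pos.ne' (a := 0) (b := 1)
  simp only [circleMap_two_pi_mul, mul_zero, mul_one] at h
  rw [h, circleAverage_def]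

end UnitIntervalParametrization

theorem integral_log_norm_sub_circle (w c : ℂ) {r : ℝ} (hr : r ≠ 0) :
    ∫ s in (0:ℝ)..1, log ‖w - (c + r * Complex.exp (2 * π * Complex.I * s))‖
      = log r + log⁺ (r⁻¹ * ‖c - w‖) := by
  simp_rw [norm_sub_rev w]
  rw [integral_comp_exp_eq_circleAverage (fun z ↦ log ‖z - w‖),
    circleAverage_log_norm_sub_const_eq_log_radius_add_posLog hr]

theorem intervalIntegrable_log_norm_sub_circle (w c : ℂ) (r : ℝ) :
    IntervalIntegrable (fun s : ℝ ↦ log ‖w - (c + r * Complex.exp (2 * π * Complex.I * s))‖)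
      volume 0 1 := by
  simp_rw [norm_sub_rev w]
  exact (circleIntegrable_log_norm_sub_const r).intervalIntegrable_comp_exp

theorem log_norm_le_integral_posLog_norm_sub_exp (b : ℂ) :
    log ‖b‖ ≤ ∫ t in (0:ℝ)..1, log⁺ ‖b - Complex.exp (2 * π * Complex.I * t)‖ := by
  have hmean := integral_log_norm_sub_circle b 0 one_ne_zero
  have hint := intervalIntegrable_log_norm_sub_circle b 0 1
  simp only [Complex.ofReal_one, one_mul, zero_add, inv_one, zero_sub, norm_neg, log_one]
    at hmean hint
  calc log ‖b‖ ≤ log⁺ ‖b‖ := log_le_posLog _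
    _ = ∫ t in (0:ℝ)..1, log ‖b - Complex.exp (2 * π * Complex.I * t)‖ := hmean.symm
    _ ≤ ∫ t in (0:ℝ)..1, log⁺ ‖b - Complex.exp (2 * π * Complex.I * t)‖ :=
      intervalIntegral.integral_mono_on zero_le_one hint
        (Continuous.intervalIntegrable (by fun_prop) 0 1) fun _ _ ↦ log_le_posLog _

theorem integral_neg_log_norm_sub_circle (w c : ℂ) {r : ℝ} (hr : r ≠ 0) :
    ∫ s in (0:ℝ)..1, -log ‖w - (c + r * Complex.exp (2 * π * Complex.I * s))‖
      = -(log r + log⁺ (r⁻¹ * ‖c - w‖)) := by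
  rw [intervalIntegral.integral_neg, integral_log_norm_sub_circle w c hr]

/-- The paper's `(δ_{x,ε}, δ_{y,ε})`: the mutual energy, for the kernel `-log |z - w|`, of the
uniform probability measures on the circles of radius `ε` around `x` and `y`. -/
noncomputable def circleMutualEnergy (ε : ℝ) (x y : ℂ) : ℝ :=
  ∫ t in (0:ℝ)..1, ∫ s in (0:ℝ)..1,
    -log ‖(x + ε * Complex.exp (2 * π * Complex.I * t))
      - (y + ε * Complex.exp (2 * π * Complex.I * s))‖

theorem circleMutualEnergy_self (x : ℂ) {ε : ℝ} (hε : 0 < ε) :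
    circleMutualEnergy ε x x = -log ε := by
  have hinner (t : ℝ) : ‖x - (x + ε * Complex.exp (2 * π * Complex.I * t))‖ = ε := by
    simp [Complex.norm_exp, hε.le]
  simp_rw [circleMutualEnergy, integral_neg_log_norm_sub_circle _ x hε.ne', hinner,
    inv_mul_cancel₀ hε.ne', posLog_one, add_zero, intervalIntegral.integral_const]
  simp

theorem circleMutualEnergy_le {x x' : ℂ} (hne : x ≠ x') {ε : ℝ} (hε : 0 < ε) :
    circleMutualEnergy ε x x' ≤ -log ‖x - x'‖ := by
  set b : ℂ := (ε : ℂ)⁻¹ * (x' - x) with hb_def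
  have hscale (t : ℝ) : ε⁻¹ * ‖x' - (x + ε * Complex.exp (2 * π * Complex.I * t))‖
      = ‖b - Complex.exp (2 * π * Complex.I * t)‖ := by
    have hb : b - Complex.exp (2 * π * Complex.I * t)
        = (ε : ℂ)⁻¹ * (x' - (x + ε * Complex.exp (2 * π * Complex.I * t))) := by
      have hε' : (ε : ℂ) ≠ 0 := Complex.ofReal_ne_zero.mpr hε.ne'
      rw [hb_def]
      field_simp
      ring
    rw [hb, norm_mul, norm_inv, Complex.norm_real, Real.norm_of_nonneg hε.le]
  have hb : log ‖b‖ = log ‖x - x'‖ - log ε := by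
    rw [norm_mul, norm_inv, Complex.norm_real, Real.norm_eq_abs, abs_of_pos hε, norm_sub_rev,
      log_mul (inv_ne_zero hε.ne') (norm_ne_zero_iff.mpr (sub_ne_zero.mpr hne)), log_inv]
    ring
  simp_rw [circleMutualEnergy, integral_neg_log_norm_sub_circle _ x' hε.ne', hscale]
  rw [intervalIntegral.integral_neg, intervalIntegral.integral_add intervalIntegrable_const
    (Continuous.intervalIntegrable (by fun_prop) 0 1), intervalIntegral.integral_const]
  have := log_norm_le_integral_posLog_norm_sub_exp b
  simp only [sub_zero, one_smul]
  linarith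

theorem integral_posLog_norm_circle_le (x : ℂ) {ε : ℝ} (hε : 0 ≤ ε) :
    ∫ t in (0:ℝ)..1, log⁺ ‖x + ε * Complex.exp (2 * π * Complex.I * t)‖ ≤ log⁺ ‖x‖ + ε := by
  have hpoint (t : ℝ) : log⁺ ‖x + ε * Complex.exp (2 * π * Complex.I * t)‖ ≤ log⁺ ‖x‖ + ε := by
    have hnorm : ‖x + ε * Complex.exp (2 * π * Complex.I * t)‖ ≤ ‖x‖ + ε := by
      refine (norm_add_le _ _).trans ?_
      simp [Complex.norm_exp, abs_of_nonneg hε]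
    exact (posLog_le_posLog (norm_nonneg _) hnorm).trans (posLog_add_le (norm_nonneg x) hε)
  calc _ ≤ ∫ _ in (0:ℝ)..1, (log⁺ ‖x‖ + ε) :=
        intervalIntegral.integral_mono_on zero_le_one
        (Continuous.intervalIntegrable (by fun_prop) 0 1) intervalIntegrable_const
        fun t _ ↦ hpoint t
    _ = log⁺ ‖x‖ + ε := by simp

theorem Finset.sum_sum_le_card_mul_add_sum_sum_erase {ι : Type*} [DecidableEq ι] (s : Finset ι)
    {f g : ι → ι → ℝ} {d : ℝ} (hdiag : ∀ x ∈ s, f x x = d)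
    (hoff : ∀ x ∈ s, ∀ y ∈ s, x ≠ y → f x y ≤ g x y) :
    ∑ x ∈ s, ∑ y ∈ s, f x y ≤ s.card * d + ∑ x ∈ s, ∑ y ∈ s.erase x, g x y := by
  rw [← nsmul_eq_mul, ← Finset.sum_const, ← Finset.sum_add_distrib]
  refine Finset.sum_le_sum fun x hx ↦ ?_
  rw [← Finset.add_sum_erase s _ hx, hdiag x hx]
  gcongr with y hy
  exact hoff x hx y (Finset.mem_of_mem_erase hy) (Finset.ne_of_mem_erase hy).symm

theorem statement7 (F : Finset ℝ) (hF : F.Nonempty) (ε : ℝ) (hε : 0 < ε) :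
    ((F.card : ℝ) ^ 2)⁻¹ * (∑ x ∈ F, ∑ x' ∈ F.erase x, -Real.log |x - x'|)
        + 2 / (F.card : ℝ) * ∑ x ∈ F, logPlus |x| ≥
      ((F.card : ℝ) ^ 2)⁻¹ * (∑ x ∈ F, ∑ x' ∈ F,
          (∫ t in (0:ℝ)..1, ∫ s in (0:ℝ)..1,
            -Real.log ‖((x : ℂ) + (ε : ℂ) * Complex.exp (2 * Real.pi * Complex.I * (t : ℂ)))
              - ((x' : ℂ) + (ε : ℂ) * Complex.exp (2 * Real.pi * Complex.I * (s : ℂ)))‖))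
        + 2 / (F.card : ℝ) * ∑ x ∈ F,
            (∫ t in (0:ℝ)..1,
              logPlus ‖(x : ℂ) + (ε : ℂ) * Complex.exp (2 * Real.pi * Complex.I * (t : ℂ))‖)
        - 2 * ε + Real.log ε / (F.card : ℝ) := by
  simp only [← circleMutualEnergy.eq_1, logPlus_eq_posLog]
  have hn : (0 : ℝ) < F.card := by exact_mod_cast hF.card_pos
  have henergy := F.sum_sum_le_card_mul_add_sum_sum_erase
    (fun x _ ↦ circleMutualEnergy_self x hε) (g := fun x x' ↦ -log |x - x'|)
    fun x _ x' _ hne ↦ by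
      simpa [← Complex.ofReal_sub] using circleMutualEnergy_le (Complex.ofReal_injective.ne hne) hε
  have hlogPlus :=
    Finset.sum_le_sum fun (x : ℝ) (_ : x ∈ F) ↦ integral_posLog_norm_circle_le x hε.le
  rw [Finset.sum_add_distrib, Finset.sum_const, nsmul_eq_mul] at hlogPlus
  have hscaledEnergy := mul_le_mul_of_nonneg_left henergy (inv_nonneg.mpr (sq_nonneg (F.card : ℝ)))
  have hscaledLogPlus := mul_le_mul_of_nonneg_left hlogPlus (div_nonneg zero_le_two hn.le)
  have hdiag : ((F.card : ℝ) ^ 2)⁻¹ * (F.card * -log ε) = -(log ε / F.card) := by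
    field_simp
  have hradius : 2 / (F.card : ℝ) * (F.card * ε) = 2 * ε := by
    field_simp
  rw [mul_add, hdiag] at hscaledEnergy
  rw [mul_add, hradius] at hscaledLogPlus
  simp only [Complex.norm_real, Real.norm_eq_abs] at hscaledLogPlus
  linarith
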